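/- arXiv:1102.5075 — 3 statements merged into one kernel-verified Lean document; each statement's English description precedes it below -/
import Mathlib

section
/- In the one-period binomial model with symmetric ε and no contingent claim (λ = 0), the exponential-utility value function satisfies V(x) = sup_α E[-exp(-γ(x + α(μh + σ√h ε)))] = -exp(-γx)·ρ(θ, h), where ρ(θ,h) = (1/2)[((1+θ√h)/(1-θ√h))^{-(1+θ√h)/2} + ((1+θ√h)/(1-θ√h))^{(1-θ√h)/2}] and θ = μ/σ; in particular V(x) is of the form -exp(-γx) times a constant independent of x. -/
/-!
Write `s = θ√h`, `c = σ√h`, so that the one-period return is `μh + σ√h ε = c (s + ε)`.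
Averaging over `ε = ±1` gives the expected utility of the position `α` as
`-exp(-γx) · ½ (exp(-(1+s)β) + exp((1-s)β))` with `β = γcα`, so the supremum over `α` is a
minimisation of a convex sum of two exponentials in `β`.  Its critical point is
`β₀ = ½ log((1+s)/(1-s))`, where the two exponentials become the two powers in `ρ`, and the
tangent-line bound `exp u ≥ exp u₀ (1 + u - u₀)` shows that `β₀` is the global minimiser.
-/

open MeasureTheory Real

theorem integral_comp_of_forall_eq_one_or_eq_neg_one {Ω : Type*} [MeasurableSpace Ω]
    {P : Measure Ω} [IsFiniteMeasure P] {ε : Ω → ℝ} (hε : Measurable ε)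
    (hεval : ∀ ω, ε ω = 1 ∨ ε ω = -1) (f : ℝ → ℝ) :
    ∫ ω, f (ε ω) ∂P = P.real {ω | ε ω = 1} * f 1 + P.real {ω | ε ω = 1}ᶜ * f (-1) := by
  set A := {ω | ε ω = 1}
  have hA : MeasurableSet A := hε (measurableSet_singleton 1)
  have hsplit : (fun ω => f (ε ω)) =
      fun ω => A.indicator (fun _ => f 1) ω + Aᶜ.indicator (fun _ => f (-1)) ω := by
    funext ω
    rcases hεval ω with hω | hω <;> norm_num [A, hω]
  rw [hsplit, integral_add ((integrable_const _).indicator hA) ((integrable_const _).indicator hA.compl),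
    integral_indicator_const _ hA, integral_indicator_const _ hA.compl, smul_eq_mul, smul_eq_mul]

theorem exp_neg_mul_add_exp_mul_le_of_critical {a b β₀ : ℝ}
    (hcrit : a * exp (-(a * β₀)) = b * exp (b * β₀)) (β : ℝ) :
    exp (-(a * β₀)) + exp (b * β₀) ≤ exp (-(a * β)) + exp (b * β) := by
  have tangent : ∀ u₀ u : ℝ, exp u₀ * (1 + (u - u₀)) ≤ exp u := fun u₀ u => by
    calc exp u₀ * (1 + (u - u₀)) ≤ exp u₀ * exp (u - u₀) := by
          gcongr; linarith [add_one_le_exp (u - u₀)]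
      _ = exp u := by rw [← exp_add]; ring_nf
  have hcancel := congrArg (· * (β - β₀)) hcrit
  linarith [tangent (-(a * β₀)) (-(a * β)), tangent (b * β₀) (b * β)]

theorem exp_mul_half_log {K : ℝ} (hK : 0 < K) (t : ℝ) : exp (t * (log K / 2)) = K ^ (t / 2) := by
  rw [rpow_def_of_pos hK]; ring_nf

theorem one_add_mul_rpow_eq_one_sub_mul_rpow {s : ℝ} (hs : |s| < 1) :
    (1 + s) * ((1 + s) / (1 - s)) ^ (-(1 + s) / 2) =
      (1 - s) * ((1 + s) / (1 - s)) ^ ((1 - s) / 2) := by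
  obtain ⟨hs₁, hs₂⟩ := abs_lt.mp hs
  have hK : 0 < (1 + s) / (1 - s) := div_pos (by linarith) (by linarith)
  rw [show (1 - s) / 2 = -(1 + s) / 2 + 1 by ring, rpow_add hK, rpow_one]
  field_simp [show (1 - s) ≠ 0 by linarith]

theorem integral_neg_exp_affine_of_symmetric_sign {Ω : Type*} [MeasurableSpace Ω]
    {P : Measure Ω} [IsProbabilityMeasure P] {ε : Ω → ℝ} (hε : Measurable ε)
    (hεval : ∀ ω, ε ω = 1 ∨ ε ω = -1) (hsym : P {ω | ε ω = 1} = 1 / 2) (γ c s x α : ℝ) :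
    ∫ ω, -exp (-γ * (x + α * (c * s + c * ε ω))) ∂P =
      -exp (-γ * x) * (1 / 2 * (exp (-((1 + s) * (γ * c * α))) + exp ((1 - s) * (γ * c * α)))) := by
  have hA : MeasurableSet {ω | ε ω = 1} := hε (measurableSet_singleton 1)
  have hhalf : P.real {ω | ε ω = 1} = 1 / 2 := by simp [measureReal_def, hsym]
  rw [integral_comp_of_forall_eq_one_or_eq_neg_one hε hεval
      (fun t => -exp (-γ * (x + α * (c * s + c * t)))),
    probReal_compl_eq_one_sub hA, hhalf,
    show -γ * (x + α * (c * s + c * 1)) = -γ * x + -((1 + s) * (γ * c * α)) by ring,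
    show -γ * (x + α * (c * s + c * -1)) = -γ * x + (1 - s) * (γ * c * α) by ring,
    exp_add, exp_add]
  ring

/-- in the one-period binomial model without a claim, the
exponential-utility value function is -exp(-γx)·ρ(θ,h). -/
theorem one_period_value_function {Ω : Type*} [MeasurableSpace Ω]
    (P : Measure Ω) [IsProbabilityMeasure P]
    (ε : Ω → ℝ) (hεmeas : Measurable ε) (hεval : ∀ ω, ε ω = 1 ∨ ε ω = -1)
    (hsym : P {ω | ε ω = 1} = 1 / 2)
    (γ σ h μ x : ℝ) (hγ : 0 < γ) (hσ : 0 < σ) (hh : 0 < h)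
    (hθ : |μ * Real.sqrt h / σ| < 1) :
    let θ : ℝ := μ / σ
    let ρ : ℝ := (1 / 2) *
      (((1 + θ * Real.sqrt h) / (1 - θ * Real.sqrt h)) ^ (-(1 + θ * Real.sqrt h) / 2)
        + ((1 + θ * Real.sqrt h) / (1 - θ * Real.sqrt h)) ^ ((1 - θ * Real.sqrt h) / 2))
    (⨆ α : ℝ, ∫ ω, -Real.exp (-γ * (x + α * (μ * h + σ * Real.sqrt h * ε ω))) ∂P)
      = -Real.exp (-γ * x) * ρ := by
  intro θ ρ
  set s := θ * √h with hs_def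
  have hs : |s| < 1 := by rwa [hs_def, div_mul_eq_mul_div]
  obtain ⟨hs₁, hs₂⟩ := abs_lt.mp hs
  have hK : 0 < (1 + s) / (1 - s) := div_pos (by linarith) (by linarith)
  set β₀ := log ((1 + s) / (1 - s)) / 2
  have hE₁ : exp (-((1 + s) * β₀)) = ((1 + s) / (1 - s)) ^ (-(1 + s) / 2) := by
    rw [← neg_mul, exp_mul_half_log hK]
  have hE₂ : exp ((1 - s) * β₀) = ((1 + s) / (1 - s)) ^ ((1 - s) / 2) := exp_mul_half_log hK _
  have hρ : ρ = 1 / 2 * (exp (-((1 + s) * β₀)) + exp ((1 - s) * β₀)) := by rw [hE₁, hE₂]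
  have hmin := exp_neg_mul_add_exp_mul_le_of_critical
    (by rw [hE₁, hE₂]; exact one_add_mul_rpow_eq_one_sub_mul_rpow hs)
  have hμh : μ * h = σ * √h * s := by
    rw [hs_def, show θ = μ / σ from rfl]; field_simp
    rw [sq_sqrt hh.le]
  simp_rw [hμh, integral_neg_exp_affine_of_symmetric_sign hεmeas hεval hsym]
  refine ciSup_eq_of_forall_le_of_forall_lt_exists_gt (fun α => ?_)
    (fun w hw => ⟨β₀ / (γ * (σ * √h)), ?_⟩)
  · nlinarith [hmin (γ * (σ * √h) * α), exp_pos (-γ * x)]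
  · rwa [mul_div_cancel₀ _ (by positivity), ← hρ]
end

section
/- The recursive indifference price is monotone in risk aversion: if 0 < γ₁ ≤ γ₂ and p₁ ≤ p₂ are bounded random variables with p₁ ≤ p₂ a.s., then (1/γ₁)·E_Q[log E[exp(γ₁ p₁) | G] | H] ≤ (1/γ₂)·E_Q[log E[exp(γ₂ p₂) | G] | H] almost surely, where H ⊆ G are sub-σ-algebras. -/
open MeasureTheory Real

private lemma rpow_tangent {x y r : ℝ} (hx : 0 < x) (hy : 0 < y) (hr0 : 0 ≤ r) (hr1 : r ≤ 1) :
    x ^ r ≤ y ^ r + r * (y ^ (r - 1) * (x - y)) := by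
  have hs : -1 ≤ x / y - 1 := by
    have : 0 ≤ x / y := (div_pos hx hy).le
    linarith
  have h := rpow_one_add_le_one_add_mul_self hs hr0 hr1
  have h1 : (1 : ℝ) + (x / y - 1) = x / y := by ring
  rw [h1, Real.div_rpow hx.le hy.le] at h
  have hyr : 0 < y ^ r := Real.rpow_pos_of_pos hy r
  rw [div_le_iff₀ hyr] at h
  have hyy : y ^ (r - 1) = y ^ r / y := by rw [Real.rpow_sub hy, Real.rpow_one]
  rw [hyy]
  calc x ^ r ≤ (1 + r * (x / y - 1)) * y ^ r := h
    _ = y ^ r + r * (y ^ r / y * (x - y)) := by field_simp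

private lemma integrable_of_bdd {Ω : Type*} {m0 : MeasurableSpace Ω} {μ : Measure Ω}
    [IsFiniteMeasure μ] {f : Ω → ℝ} (hf : AEStronglyMeasurable f μ) {M : ℝ}
    (h : ∀ᵐ ω ∂μ, |f ω| ≤ M) : Integrable f μ :=
  Integrable.mono' (integrable_const M) hf (by simpa [Real.norm_eq_abs] using h)

private lemma exp_gamma_bd {γ C : ℝ} (hγ : 0 ≤ γ) {t : ℝ} (ht : |t| ≤ C) :
    -(γ * C) ≤ γ * t ∧ γ * t ≤ γ * C := by
  obtain ⟨h1, h2⟩ := abs_le.mp ht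
  constructor
  · nlinarith
  · exact mul_le_mul_of_nonneg_left h2 hγ

private lemma integrable_exp_gamma {Ω : Type*} {m0 : MeasurableSpace Ω} {μ : Measure Ω}
    [IsFiniteMeasure μ] {p : Ω → ℝ} (hp : Measurable[m0] p) {γ C : ℝ} (hγ : 0 ≤ γ)
    (hbd : ∀ ω, |p ω| ≤ C) : Integrable (fun ω => Real.exp (γ * p ω)) μ :=
  integrable_of_bdd (Real.measurable_exp.comp (hp.const_mul γ)).aestronglyMeasurable
    (ae_of_all _ fun ω => by
      rw [abs_of_pos (Real.exp_pos _)]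
      exact Real.exp_le_exp.2 (exp_gamma_bd hγ (hbd ω)).2)

private lemma condexp_exp_bounds {Ω : Type*} {m0 : MeasurableSpace Ω} (P : Measure Ω)
    [IsProbabilityMeasure P] (G : MeasurableSpace Ω) (hG : G ≤ m0)
    {p : Ω → ℝ} (hp : Measurable[m0] p) {γ C : ℝ} (hγ : 0 ≤ γ) (hbd : ∀ ω, |p ω| ≤ C) :
    ∀ᵐ ω ∂P, Real.exp (-(γ * C)) ≤ (P[fun ω' => Real.exp (γ * p ω') | G]) ω ∧
      (P[fun ω' => Real.exp (γ * p ω') | G]) ω ≤ Real.exp (γ * C) := by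
  have hint : Integrable (fun ω' => Real.exp (γ * p ω')) P :=
    integrable_exp_gamma (μ := P) hp hγ hbd
  have h1 : P[fun _ : Ω => Real.exp (-(γ * C)) | G] = fun _ => Real.exp (-(γ * C)) :=
    condExp_const hG _
  have h2 : P[fun _ : Ω => Real.exp (γ * C) | G] = fun _ => Real.exp (γ * C) :=
    condExp_const hG _
  have hl := condExp_mono (μ := P) (m := G) (integrable_const _) hint
    (ae_of_all _ fun ω => Real.exp_le_exp.2 (exp_gamma_bd hγ (hbd ω)).1)
  have hu := condExp_mono (μ := P) (m := G) hint (integrable_const _)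
    (ae_of_all _ fun ω => Real.exp_le_exp.2 (exp_gamma_bd hγ (hbd ω)).2)
  rw [h1] at hl; rw [h2] at hu
  filter_upwards [hl, hu] with ω h h' using ⟨h, h'⟩

private lemma key_mono_gamma {Ω : Type*} {m0 : MeasurableSpace Ω} (P : Measure Ω)
    [IsProbabilityMeasure P] (G : MeasurableSpace Ω) (hG : G ≤ m0)
    {p : Ω → ℝ} (hp : Measurable[m0] p) {C : ℝ} (hbd : ∀ ω, |p ω| ≤ C)
    {γa γb : ℝ} (ha : 0 < γa) (hab : γa ≤ γb) :
    ∀ᵐ ω ∂P, (1 / γa) * Real.log ((P[fun ω' => Real.exp (γa * p ω') | G]) ω)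
      ≤ (1 / γb) * Real.log ((P[fun ω' => Real.exp (γb * p ω') | G]) ω) := by
  have hb : 0 < γb := ha.trans_le hab
  set r := γa / γb with hrdef
  have hr0 : 0 < r := div_pos ha hb
  have hr1 : r ≤ 1 := (div_le_one hb).2 hab
  set X := fun ω => Real.exp (γb * p ω) with hXdef
  set Y := P[X | G] with hYdef
  have hXmeas : Measurable[m0] X := Real.measurable_exp.comp (hp.const_mul γb)
  have hXpos : ∀ ω, 0 < X ω := fun ω => Real.exp_pos _
  have hXub : ∀ ω, X ω ≤ Real.exp (γb * C) := fun ω =>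
    Real.exp_le_exp.2 (exp_gamma_bd hb.le (hbd ω)).2
  have hXint : Integrable X P := integrable_exp_gamma (μ := P) hp hb.le hbd
  have hYsm : StronglyMeasurable[G] Y := stronglyMeasurable_condExp
  have hYm : Measurable[m0] Y := (hYsm.mono hG).measurable
  have hYint : Integrable Y P := integrable_condExp
  have hYbd : ∀ᵐ ω ∂P, Real.exp (-(γb * C)) ≤ Y ω ∧ Y ω ≤ Real.exp (γb * C) :=
    condexp_exp_bounds P G hG hp hb.le hbd
  set Z := fun ω => Y ω ^ (r - 1) with hZdef
  have hZsmG : StronglyMeasurable[G] Z :=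
    (hYsm.measurable.pow (@measurable_const ℝ Ω _ G (r - 1))).stronglyMeasurable
  have hZm : Measurable[m0] Z := hYm.pow (@measurable_const ℝ Ω _ m0 (r - 1))
  set K := Real.exp (-(γb * C)) ^ (r - 1) with hKdef
  have hK0 : 0 < K := Real.rpow_pos_of_pos (Real.exp_pos _) _
  have hZbd : ∀ᵐ ω ∂P, |Z ω| ≤ K := by
    filter_upwards [hYbd] with ω hω
    have hYpos : 0 < Y ω := lt_of_lt_of_le (Real.exp_pos _) hω.1
    rw [abs_of_pos (Real.rpow_pos_of_pos hYpos _)]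
    exact Real.rpow_le_rpow_of_nonpos (Real.exp_pos _) hω.1 (by linarith)
  have hYr_int : Integrable (fun ω => Y ω ^ r) P := by
    refine integrable_of_bdd
      ((hYm.pow (@measurable_const ℝ Ω _ m0 r)).aestronglyMeasurable)
      (M := Real.exp (γb * C) ^ r) ?_
    filter_upwards [hYbd] with ω hω
    have hYpos : 0 < Y ω := lt_of_lt_of_le (Real.exp_pos _) hω.1
    rw [abs_of_pos (Real.rpow_pos_of_pos hYpos _)]
    exact Real.rpow_le_rpow hYpos.le hω.2 hr0.le
  have hg_int : Integrable (fun ω => Z ω * (X ω - Y ω)) P := by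
    refine integrable_of_bdd ((hZm.mul (hXmeas.sub hYm)).aestronglyMeasurable)
      (M := K * (2 * Real.exp (γb * C))) ?_
    filter_upwards [hYbd, hZbd] with ω hω hZω
    rw [abs_mul]
    refine mul_le_mul hZω ?_ (abs_nonneg _) hK0.le
    have h1 : |X ω| ≤ Real.exp (γb * C) := by
      rw [abs_of_pos (hXpos ω)]; exact hXub ω
    have h2 : |Y ω| ≤ Real.exp (γb * C) := by
      rw [abs_of_pos (lt_of_lt_of_le (Real.exp_pos _) hω.1)]; exact hω.2
    calc |X ω - Y ω| ≤ |X ω| + |Y ω| := abs_sub _ _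
      _ ≤ 2 * Real.exp (γb * C) := by linarith
  set W := fun ω => Y ω ^ r + r * (Z ω * (X ω - Y ω)) with hWdef
  have hWint : Integrable W P := hYr_int.add (hg_int.const_mul r)
  have hXr_int : Integrable (fun ω => X ω ^ r) P := by
    refine integrable_of_bdd
      ((hXmeas.pow (@measurable_const ℝ Ω _ m0 r)).aestronglyMeasurable)
      (M := Real.exp (γb * C) ^ r) (ae_of_all _ fun ω => ?_)
    rw [abs_of_pos (Real.rpow_pos_of_pos (hXpos ω) _)]
    exact Real.rpow_le_rpow (hXpos ω).le (hXub ω) hr0.le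
  have hptw : ∀ᵐ ω ∂P, X ω ^ r ≤ W ω := by
    filter_upwards [hYbd] with ω hω
    have hYpos : 0 < Y ω := lt_of_lt_of_le (Real.exp_pos _) hω.1
    exact rpow_tangent (hXpos ω) hYpos hr0.le hr1
  have hcond : P[fun ω => X ω ^ r | G] ≤ᵐ[P] P[W | G] := condExp_mono hXr_int hWint hptw
  have hYr_smG : StronglyMeasurable[G] fun ω => Y ω ^ r :=
    (hYsm.measurable.pow (@measurable_const ℝ Ω _ G r)).stronglyMeasurable
  have hWcond : P[W | G] =ᵐ[P] fun ω => Y ω ^ r := by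
    have hsplit : W = (fun ω => Y ω ^ r) + r • fun ω => Z ω * (X ω - Y ω) := by
      funext ω; simp [hWdef]
    rw [hsplit]
    have e1 := condExp_add (μ := P) (m := G) hYr_int (hg_int.smul r)
    have e2 : P[(fun ω => Y ω ^ r) | G] = fun ω => Y ω ^ r :=
      condExp_of_stronglyMeasurable hG hYr_smG hYr_int
    have e3 := condExp_smul (μ := P) (m := G) r (fun ω => Z ω * (X ω - Y ω))
    have e4 : P[(fun ω => Z ω * (X ω - Y ω)) | G]
        =ᵐ[P] fun ω => Z ω * ((P[fun ω => X ω - Y ω | G]) ω) := by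
      have := condExp_mul_of_stronglyMeasurable_left (μ := P) hZsmG
        (g := fun ω => X ω - Y ω) (by exact hg_int) (hXint.sub hYint)
      exact this
    have e5 : P[(fun ω => X ω - Y ω) | G] =ᵐ[P] fun _ => (0 : ℝ) := by
      have h6 := condExp_sub (μ := P) (m := G) hXint hYint
      have h7 : P[Y | G] = Y := condExp_of_stronglyMeasurable hG hYsm hYint
      have h8 : (fun ω => X ω - Y ω) = X - Y := rfl
      rw [h8]
      filter_upwards [h6] with ω hω
      simp only [hω, Pi.sub_apply, h7, ← hYdef]
      ring
    filter_upwards [e1, e3, e4, e5] with ω h1 h3 h4 h5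
    rw [h1]
    simp only [Pi.add_apply, Pi.smul_apply, smul_eq_mul]
    rw [e2, h3]
    simp only [Pi.smul_apply, smul_eq_mul]
    rw [h4, h5]
    ring
  have hfun : (fun ω' => Real.exp (γa * p ω')) = fun ω => X ω ^ r := by
    funext ω
    rw [hXdef, ← Real.exp_mul]
    congr 1
    rw [hrdef]
    field_simp
  have hAbd : ∀ᵐ ω ∂P, Real.exp (-(γa * C)) ≤ (P[fun ω' => Real.exp (γa * p ω') | G]) ω :=
    (condexp_exp_bounds P G hG hp ha.le hbd).mono fun ω h => h.1
  rw [hfun] at hAbd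
  rw [hfun]
  filter_upwards [hcond, hWcond, hYbd, hAbd] with ω hc hwω hYω hAω
  have hYpos : 0 < Y ω := lt_of_lt_of_le (Real.exp_pos _) hYω.1
  have hApos : 0 < (P[fun ω => X ω ^ r | G]) ω := lt_of_lt_of_le (Real.exp_pos _) hAω
  have hle' : (P[fun ω => X ω ^ r | G]) ω ≤ Y ω ^ r := by rw [← hwω]; exact hc
  have hlog : Real.log ((P[fun ω => X ω ^ r | G]) ω) ≤ r * Real.log (Y ω) := by
    calc Real.log ((P[fun ω => X ω ^ r | G]) ω) ≤ Real.log (Y ω ^ r) :=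
          Real.log_le_log hApos hle'
      _ = r * Real.log (Y ω) := Real.log_rpow hYpos r
  calc (1 / γa) * Real.log ((P[fun ω => X ω ^ r | G]) ω)
      ≤ (1 / γa) * (r * Real.log (Y ω)) :=
        mul_le_mul_of_nonneg_left hlog (div_pos one_pos ha).le
    _ = (1 / γb) * Real.log (Y ω) := by
        rw [hrdef]; field_simp

private lemma key_mono_payoff {Ω : Type*} {m0 : MeasurableSpace Ω} (P : Measure Ω)
    [IsProbabilityMeasure P] (G : MeasurableSpace Ω) (hG : G ≤ m0)
    {p₁ p₂ : Ω → ℝ} (h1 : Measurable[m0] p₁) (h2 : Measurable[m0] p₂) {C : ℝ}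
    (hb1 : ∀ ω, |p₁ ω| ≤ C) (hb2 : ∀ ω, |p₂ ω| ≤ C) {γ : ℝ} (hγ : 0 < γ)
    (hle : ∀ᵐ ω ∂P, p₁ ω ≤ p₂ ω) :
    ∀ᵐ ω ∂P, Real.log ((P[fun ω' => Real.exp (γ * p₁ ω') | G]) ω)
      ≤ Real.log ((P[fun ω' => Real.exp (γ * p₂ ω') | G]) ω) := by
  have hm := condExp_mono (μ := P) (m := G) (integrable_exp_gamma (μ := P) h1 hγ.le hb1)
    (integrable_exp_gamma (μ := P) h2 hγ.le hb2)
    (hle.mono fun ω h => Real.exp_le_exp.2 (mul_le_mul_of_nonneg_left h hγ.le))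
  filter_upwards [hm, condexp_exp_bounds P G hG h1 hγ.le hb1] with ω h hb
  exact Real.log_le_log (lt_of_lt_of_le (Real.exp_pos _) hb.1) h

/-- the recursive indifference price is monotone in the risk
aversion and in the payoff. -/
theorem recursive_price_monotone_in_gamma {Ω : Type*} (H G : MeasurableSpace Ω) [m0 : MeasurableSpace Ω]
    (P Q : Measure Ω) [IsProbabilityMeasure P] [IsProbabilityMeasure Q]
    (hQP : Q ≪ P)
    (hHG : H ≤ G) (hG : G ≤ m0)
    (γ₁ γ₂ : ℝ) (hγ₁ : 0 < γ₁) (hγ₁₂ : γ₁ ≤ γ₂)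
    (p₁ p₂ : Ω → ℝ) (h1meas : Measurable p₁) (h2meas : Measurable p₂)
    (C : ℝ) (h1bd : ∀ ω, |p₁ ω| ≤ C) (h2bd : ∀ ω, |p₂ ω| ≤ C)
    (hle : ∀ᵐ ω ∂P, p₁ ω ≤ p₂ ω) :
    ∀ᵐ ω ∂Q,
      (1 / γ₁) * (Q[fun ω' => Real.log ((P[fun ω'' => Real.exp (γ₁ * p₁ ω'') | G]) ω') | H]) ω
        ≤ (1 / γ₂) * (Q[fun ω' => Real.log ((P[fun ω'' => Real.exp (γ₂ * p₂ ω'') | G]) ω') | H]) ω := by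
  have hγ₂ : 0 < γ₂ := hγ₁.trans_le hγ₁₂
  have hm1 : Measurable[m0] p₁ := h1meas
  have hm2 : Measurable[m0] p₂ := h2meas
  set C' := |C| with hC'
  have hb1 : ∀ ω, |p₁ ω| ≤ C' := fun ω => (h1bd ω).trans (le_abs_self C)
  have hb2 : ∀ ω, |p₂ ω| ≤ C' := fun ω => (h2bd ω).trans (le_abs_self C)
  set f₁ := fun ω' => Real.log ((P[fun ω'' => Real.exp (γ₁ * p₁ ω'') | G]) ω') with hf₁
  set f₂ := fun ω' => Real.log ((P[fun ω'' => Real.exp (γ₂ * p₂ ω'') | G]) ω') with hf₂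
  have haeP : ∀ᵐ ω ∂P, (1 / γ₁) * f₁ ω ≤ (1 / γ₂) * f₂ ω := by
    filter_upwards [key_mono_gamma P G hG hm1 hb1 hγ₁ hγ₁₂,
      key_mono_payoff P G hG hm1 hm2 hb1 hb2 hγ₂ hle] with ω hg hp
    refine hg.trans ?_
    exact mul_le_mul_of_nonneg_left hp (div_pos one_pos hγ₂).le
  have haeQ : ∀ᵐ ω ∂Q, (1 / γ₁) * f₁ ω ≤ (1 / γ₂) * f₂ ω := haeP.filter_mono hQP.ae_le
  have hint : ∀ (γ : ℝ) (p : Ω → ℝ), 0 < γ → Measurable[m0] p → (∀ ω, |p ω| ≤ C') →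
      Integrable (fun ω' => Real.log ((P[fun ω'' => Real.exp (γ * p ω'') | G]) ω')) Q := by
    intro γ p hγ hp hbd
    refine integrable_of_bdd
      ((Real.measurable_log.comp
        (stronglyMeasurable_condExp.mono hG).measurable).aestronglyMeasurable)
      (M := γ * C') ?_
    filter_upwards [(condexp_exp_bounds P G hG hp hγ.le hbd).filter_mono hQP.ae_le] with ω hω
    have hpos : 0 < (P[fun ω'' => Real.exp (γ * p ω'') | G]) ω :=
      lt_of_lt_of_le (Real.exp_pos _) hω.1
    rw [abs_le]
    constructor
    · exact (Real.le_log_iff_exp_le hpos).2 hω.1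
    · exact (Real.log_le_iff_le_exp hpos).2 hω.2
  have h1int : Integrable f₁ Q := hint γ₁ p₁ hγ₁ hm1 hb1
  have h2int : Integrable f₂ Q := hint γ₂ p₂ hγ₂ hm2 hb2
  have hg1 : Integrable ((1 / γ₁) • f₁) Q := h1int.smul _
  have hg2 : Integrable ((1 / γ₂) • f₂) Q := h2int.smul _
  have haeQ' : (1 / γ₁) • f₁ ≤ᵐ[Q] (1 / γ₂) • f₂ := by
    filter_upwards [haeQ] with ω h
    simpa [Pi.smul_apply, smul_eq_mul] using h
  have hc := condExp_mono (μ := Q) (m := H) hg1 hg2 haeQ'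
  have hs1 := condExp_smul (μ := Q) (m := H) (1 / γ₁) f₁
  have hs2 := condExp_smul (μ := Q) (m := H) (1 / γ₂) f₂
  filter_upwards [hc, hs1, hs2] with ω h hsa hsb
  simp only [Pi.smul_apply, smul_eq_mul] at hsa hsb
  rw [← hsa, ← hsb]
  exact h
end

section
/- One-period indifference pricing identity: in the one-period binomial model with traded stock driven by ε₁ (symmetric under P, with Q(ε₁=1) = (1-θ√h)/2) and a bounded payoff F measurable with respect to σ(ε₁, ε₂) where ε₂ is symmetric and independent under both P and Q, the number p = (1/γ)·E_Q[ log E_Q[e^{γF} | σ(ε₁)] ] satisfies: sup_α E_P[-exp(-γ(x + p + α(μh + σ√h ε₁) - F))] = sup_α E_P[-exp(-γ(x + α(μh + σ√h ε₁)))]. -/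
/-!
Write `F = f (ε₁, ε₂)`. Averaging out the independent symmetric sign `ε₂` gives, under `P` as
under `Q`, `E[e^{γF} | ε₁] = G ε₁` with `G s = (e^{γ f(s,1)} + e^{γ f(s,-1)}) / 2`, so the utility
of `x + p + α ΔS - F` is that of the wealth `x + p + α ΔS - (1/γ) log G ε₁`. Since `Q` is the
martingale measure of the stock, the claim `log G ε₁` is replicated by its `Q`-price `γ p` plus
`γ β` shares, `β = (log G 1 - log G (-1)) / (2 γ σ √h)`. Hence the objective at `α` with `F` is the
objective at `α - β` without it, and the two suprema agree after reindexing.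
-/

open MeasureTheory ProbabilityTheory Real

theorem exists_measurable_eq_comp_prodMk {Ω β γ Z : Type*} {mβ : MeasurableSpace β}
    {mγ : MeasurableSpace γ} [MeasurableSpace Z] [StandardBorelSpace Z] [Nonempty Z]
    {X : Ω → β} {Y : Ω → γ} {F : Ω → Z} (hF : Measurable[mβ.comap X ⊔ mγ.comap Y] F) :
    ∃ f : β × γ → Z, Measurable f ∧ F = fun ω => f (X ω, Y ω) := by
  rw [← MeasurableSpace.comap_prodMk] at hF
  exact hF.exists_eq_measurable_comp

theorem ProbabilityTheory.IndepFun.condExp_comp_prodMk_ae_eq {Ω β γ E : Type*}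
    {mΩ : MeasurableSpace Ω} {mβ : MeasurableSpace β} [MeasurableSpace γ] [StandardBorelSpace γ]
    [Nonempty γ] [NormedAddCommGroup E] [NormedSpace ℝ E] [CompleteSpace E]
    {μ : Measure Ω} [IsFiniteMeasure μ] {X : Ω → β} {Y : Ω → γ}
    (hX : Measurable X) (hY : Measurable Y) (hXY : IndepFun X Y μ) {φ : β × γ → E}
    (hφ : StronglyMeasurable φ) (hint : Integrable (fun ω => φ (X ω, Y ω)) μ) :
    μ[fun ω => φ (X ω, Y ω) | mβ.comap X] =ᵐ[μ] fun ω => ∫ ω', φ (X ω, Y ω') ∂μ := by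
  have hlaw : condDistrib Y X μ =ᵐ[μ.map X] Kernel.const β (μ.map Y) := by
    refine condDistrib_ae_eq_of_measure_eq_compProd X hY.aemeasurable ?_
    rw [Measure.compProd_const]
    exact (indepFun_iff_map_prod_eq_prod_map_map hX.aemeasurable hY.aemeasurable).mp hXY
  filter_upwards [condExp_prod_ae_eq_integral_condDistrib hX hY.aemeasurable hφ hint,
    ae_of_ae_map hX.aemeasurable hlaw] with ω hω hlawω
  rw [hω, hlawω, Kernel.const_apply, integral_map hY.aemeasurable]
  exact (hφ.comp_measurable measurable_prodMk_left).aestronglyMeasurable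

section SignVariables

variable {Ω : Type*} {mΩ : MeasurableSpace Ω} {μ : Measure Ω} {X Y : Ω → ℝ}

theorem integral_comp_of_sign [IsFiniteMeasure μ] (hX : Measurable X)
    (hXval : ∀ ω, X ω = 1 ∨ X ω = -1) (φ : ℝ → ℝ) :
    ∫ ω, φ (X ω) ∂μ = μ.real {ω | X ω = 1} * φ 1 + μ.real {ω | X ω = -1} * φ (-1) := by
  have h1 : MeasurableSet {ω | X ω = 1} := hX (measurableSet_singleton 1)
  have h2 : MeasurableSet {ω | X ω = -1} := hX (measurableSet_singleton (-1))
  have hsplit : (fun ω => φ (X ω)) = fun ω => {ω | X ω = 1}.indicator (fun _ => φ 1) ω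
      + {ω | X ω = -1}.indicator (fun _ => φ (-1)) ω := by
    ext ω
    rcases hXval ω with h | h <;> simp [Set.indicator_apply, h] <;> norm_num
  rw [hsplit, integral_add ((integrable_const _).indicator h1) ((integrable_const _).indicator h2),
    integral_indicator_const _ h1, integral_indicator_const _ h2, smul_eq_mul, smul_eq_mul]

theorem measureReal_eq_neg_one_of_sign [IsProbabilityMeasure μ] (hX : Measurable X)
    (hXval : ∀ ω, X ω = 1 ∨ X ω = -1) :
    μ.real {ω | X ω = -1} = 1 - μ.real {ω | X ω = 1} := by
  have h1 : MeasurableSet {ω | X ω = 1} := hX (measurableSet_singleton 1)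
  have hcompl : {ω | X ω = -1} = {ω | X ω = 1}ᶜ := by
    ext ω
    rcases hXval ω with h | h <;> simp [h] <;> norm_num
  rw [hcompl, probReal_compl_eq_one_sub h1]

theorem integral_comp_of_symmetric_sign [IsProbabilityMeasure μ] (hX : Measurable X)
    (hXval : ∀ ω, X ω = 1 ∨ X ω = -1) (hX1 : μ {ω | X ω = 1} = 1 / 2) (φ : ℝ → ℝ) :
    ∫ ω, φ (X ω) ∂μ = (φ 1 + φ (-1)) / 2 := by
  have hX1' : μ.real {ω | X ω = 1} = 1 / 2 := by simp [measureReal_def, hX1]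
  rw [integral_comp_of_sign hX hXval, measureReal_eq_neg_one_of_sign hX hXval, hX1']
  ring

theorem integrable_comp_prodMk_of_sign [IsFiniteMeasure μ] (hX : Measurable X) (hY : Measurable Y)
    (hXval : ∀ ω, X ω = 1 ∨ X ω = -1) (hYval : ∀ ω, Y ω = 1 ∨ Y ω = -1)
    {φ : ℝ × ℝ → ℝ} (hφ : Measurable φ) :
    Integrable (fun ω => φ (X ω, Y ω)) μ := by
  refine Integrable.of_bound (hφ.comp (hX.prodMk hY)).aestronglyMeasurable
    (|φ (1, 1)| + |φ (1, -1)| + |φ (-1, 1)| + |φ (-1, -1)|) (ae_of_all _ fun ω => ?_)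
  rcases hXval ω with h | h <;> rcases hYval ω with h' | h' <;>
    simp only [h, h', Real.norm_eq_abs] <;>
    linarith [abs_nonneg (φ (1, 1)), abs_nonneg (φ (1, -1)), abs_nonneg (φ (-1, 1)),
      abs_nonneg (φ (-1, -1))]

theorem condExp_comp_prodMk_ae_eq_average [IsProbabilityMeasure μ] (hX : Measurable X)
    (hY : Measurable Y) (hXval : ∀ ω, X ω = 1 ∨ X ω = -1) (hYval : ∀ ω, Y ω = 1 ∨ Y ω = -1)
    (hY1 : μ {ω | Y ω = 1} = 1 / 2) (hXY : IndepFun X Y μ) {φ : ℝ × ℝ → ℝ} (hφ : Measurable φ) :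
    μ[fun ω => φ (X ω, Y ω) | MeasurableSpace.comap X inferInstance] =ᵐ[μ]
      fun ω => (φ (X ω, 1) + φ (X ω, -1)) / 2 := by
  filter_upwards [hXY.condExp_comp_prodMk_ae_eq hX hY hφ.stronglyMeasurable
    (integrable_comp_prodMk_of_sign hX hY hXval hYval hφ)] with ω hω
  rw [hω, integral_comp_of_symmetric_sign hY hYval hY1 (fun y => φ (X ω, y))]

theorem integral_comp_prodMk_eq_average [IsProbabilityMeasure μ] (hX : Measurable X)
    (hY : Measurable Y) (hXval : ∀ ω, X ω = 1 ∨ X ω = -1) (hYval : ∀ ω, Y ω = 1 ∨ Y ω = -1)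
    (hY1 : μ {ω | Y ω = 1} = 1 / 2) (hXY : IndepFun X Y μ) {φ : ℝ × ℝ → ℝ} (hφ : Measurable φ) :
    ∫ ω, φ (X ω, Y ω) ∂μ = ∫ ω, (φ (X ω, 1) + φ (X ω, -1)) / 2 ∂μ := by
  rw [← integral_condExp hX.comap_le]
  exact integral_congr_ae (condExp_comp_prodMk_ae_eq_average hX hY hXval hYval hY1 hXY hφ)

theorem integral_log_condExp_exp_comp_prodMk [IsProbabilityMeasure μ] (hX : Measurable X)
    (hY : Measurable Y) (hXval : ∀ ω, X ω = 1 ∨ X ω = -1) (hYval : ∀ ω, Y ω = 1 ∨ Y ω = -1)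
    (hY1 : μ {ω | Y ω = 1} = 1 / 2) (hXY : IndepFun X Y μ) {f : ℝ × ℝ → ℝ} (hf : Measurable f)
    (γ : ℝ) :
    ∫ ω, log (μ[fun ω' => exp (γ * f (X ω', Y ω')) | MeasurableSpace.comap X inferInstance] ω) ∂μ
      = μ.real {ω | X ω = 1} * log ((exp (γ * f (1, 1)) + exp (γ * f (1, -1))) / 2)
        + (1 - μ.real {ω | X ω = 1}) * log ((exp (γ * f (-1, 1)) + exp (γ * f (-1, -1))) / 2) := by
  have hcond := condExp_comp_prodMk_ae_eq_average hX hY hXval hYval hY1 hXY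
    (φ := fun z => exp (γ * f z)) (by fun_prop)
  refine (integral_congr_ae (hcond.fun_comp log)).trans ?_
  rw [← measureReal_eq_neg_one_of_sign hX hXval]
  exact integral_comp_of_sign hX hXval fun s => log ((exp (γ * f (s, 1)) + exp (γ * f (s, -1))) / 2)

theorem integral_neg_exp_sub_comp_prodMk [IsProbabilityMeasure μ] (hX : Measurable X)
    (hY : Measurable Y) (hXval : ∀ ω, X ω = 1 ∨ X ω = -1) (hYval : ∀ ω, Y ω = 1 ∨ Y ω = -1)
    (hY1 : μ {ω | Y ω = 1} = 1 / 2) (hXY : IndepFun X Y μ) {f : ℝ × ℝ → ℝ} (hf : Measurable f)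
    {w : ℝ → ℝ} (hw : Measurable w) (γ : ℝ) :
    ∫ ω, -exp (-γ * (w (X ω) - f (X ω, Y ω))) ∂μ
      = ∫ ω, -(exp (-γ * w (X ω)) * ((exp (γ * f (X ω, 1)) + exp (γ * f (X ω, -1))) / 2)) ∂μ := by
  rw [integral_comp_prodMk_eq_average hX hY hXval hYval hY1 hXY
    (φ := fun z => -exp (-γ * (w z.1 - f z))) (by fun_prop)]
  refine integral_congr_ae (ae_of_all _ fun ω => ?_)
  have hexp_sub (a : ℝ) : exp (-γ * (w (X ω) - a)) = exp (-γ * w (X ω)) * exp (γ * a) := by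
    rw [← exp_add]; ring_nf
  simp only [hexp_sub]
  ring

theorem integral_neg_exp_sub_eq_of_log_replication [IsProbabilityMeasure μ] (hX : Measurable X)
    (hY : Measurable Y) (hXval : ∀ ω, X ω = 1 ∨ X ω = -1) (hYval : ∀ ω, Y ω = 1 ∨ Y ω = -1)
    (hY1 : μ {ω | Y ω = 1} = 1 / 2) (hXY : IndepFun X Y μ) {f : ℝ × ℝ → ℝ} (hf : Measurable f)
    {γ c β a b : ℝ} (hrep : ∀ s, s = 1 ∨ s = -1 →
      log ((exp (γ * f (s, 1)) + exp (γ * f (s, -1))) / 2) = γ * c + γ * β * (a + b * s))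
    (x α : ℝ) :
    ∫ ω, -exp (-γ * (x + c + α * (a + b * X ω) - f (X ω, Y ω))) ∂μ
      = ∫ ω, -exp (-γ * (x + (α - β) * (a + b * X ω))) ∂μ := by
  refine (integral_neg_exp_sub_comp_prodMk hX hY hXval hYval hY1 hXY hf
    (w := fun s => x + c + α * (a + b * s)) (by fun_prop) γ).trans
    (integral_congr_ae (ae_of_all _ fun ω => ?_))
  set G := (exp (γ * f (X ω, 1)) + exp (γ * f (X ω, -1))) / 2
  have hexp : -γ * (x + (α - β) * (a + b * X ω)) = -γ * (x + c + α * (a + b * X ω)) + log G := by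
    linear_combination -hrep (X ω) (hXval ω)
  dsimp only
  rw [hexp, exp_add, exp_log (by positivity : 0 < G)]

end SignVariables

-- Completeness of the binomial market: under weights `q` making the return `a + b s` centred,
-- the claim `L` is its `q`-mean plus `(L 1 - L (-1)) / (2 b)` units of the return.
theorem binomial_replication {q a b : ℝ} (hb : b ≠ 0)
    (hmean : q * (a + b) + (1 - q) * (a - b) = 0) (L : ℝ → ℝ) {s : ℝ} (hs : s = 1 ∨ s = -1) :
    L s - (q * L 1 + (1 - q) * L (-1)) = (L 1 - L (-1)) / (2 * b) * (a + b * s) := by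
  have ha : a = b * (1 - 2 * q) := by linear_combination hmean
  rcases hs with rfl | rfl <;> field_simp <;> rw [ha] <;> ring

theorem one_period_indifference_identity_general {Ω : Type*} [m0 : MeasurableSpace Ω]
    (P Q : Measure Ω) [IsProbabilityMeasure P] [IsProbabilityMeasure Q]
    (ε₁ ε₂ : Ω → ℝ) (h1meas : Measurable ε₁) (h2meas : Measurable ε₂)
    (h1val : ∀ ω, ε₁ ω = 1 ∨ ε₁ ω = -1) (h2val : ∀ ω, ε₂ ω = 1 ∨ ε₂ ω = -1)
    (hP2 : P {ω | ε₂ ω = 1} = 1 / 2)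
    (hindP : IndepFun ε₁ ε₂ P)
    (h σ θ γ μ x : ℝ) (hh : 0 < h) (hσ : 0 < σ) (hγ : 0 < γ)
    (hθ1 : θ * Real.sqrt h < 1) (hμ : μ = θ * σ)
    (hQ1 : Q {ω | ε₁ ω = 1} = ENNReal.ofReal ((1 - θ * Real.sqrt h) / 2))
    (hQ2 : Q {ω | ε₂ ω = 1} = 1 / 2)
    (hindQ : IndepFun ε₁ ε₂ Q)
    (F : Ω → ℝ)
    (hFmeas : Measurable[(MeasurableSpace.comap ε₁ inferInstance) ⊔
      (MeasurableSpace.comap ε₂ inferInstance)] F) :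
    let p : ℝ := (1 / γ) * ∫ ω, Real.log
      ((Q[fun ω' => Real.exp (γ * F ω') | MeasurableSpace.comap ε₁ inferInstance]) ω) ∂Q
    (⨆ α : ℝ, ∫ ω, -Real.exp (-γ * (x + p + α * (μ * h + σ * Real.sqrt h * ε₁ ω) - F ω)) ∂P)
      = ⨆ α : ℝ, ∫ ω, -Real.exp (-γ * (x + α * (μ * h + σ * Real.sqrt h * ε₁ ω))) ∂P := by
  intro p
  obtain ⟨f, hf, rfl⟩ := exists_measurable_eq_comp_prodMk hFmeas
  set G : ℝ → ℝ := fun s => (exp (γ * f (s, 1)) + exp (γ * f (s, -1))) / 2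
  set q := (1 - θ * √h) / 2 with hq_def
  have hq : Q.real {ω | ε₁ ω = 1} = q := by
    rw [measureReal_def, hQ1, ENNReal.toReal_ofReal (by rw [hq_def]; linarith)]
  have hp : γ * p = q * log (G 1) + (1 - q) * log (G (-1)) := by
    rw [← hq, ← integral_log_condExp_exp_comp_prodMk h1meas h2meas h1val h2val hQ2 hindQ hf]
    simp only [p]
    field_simp
  clear_value p
  have hmean : q * (μ * h + σ * √h) + (1 - q) * (μ * h - σ * √h) = 0 := by
    rw [hq_def, hμ]; linear_combination (-θ * σ) * sq_sqrt hh.le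
  obtain ⟨β, hβ⟩ : ∃ β, γ * β = (log (G 1) - log (G (-1))) / (2 * (σ * √h)) :=
    ⟨_, mul_div_cancel₀ _ hγ.ne'⟩
  have hrep (s : ℝ) (hs : s = 1 ∨ s = -1) :
      log (G s) = γ * p + γ * β * (μ * h + σ * √h * s) := by
    linear_combination binomial_replication (mul_pos hσ (sqrt_pos.mpr hh)).ne' hmean
      (fun s => log (G s)) hs - hp - (μ * h + σ * √h * s) * hβ
  simp_rw [integral_neg_exp_sub_eq_of_log_replication h1meas h2meas h1val h2val hP2 hindP hf hrep]
  exact (Function.Surjective.iSup_comp (fun y => ⟨y + β, by ring⟩)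
    (fun α => ∫ ω, -exp (-γ * (x + α * (μ * h + σ * √h * ε₁ ω))) ∂P))

/-- the one-period utility indifference price identity. -/
theorem one_period_indifference_identity {Ω : Type*} [m0 : MeasurableSpace Ω]
    (P Q : Measure Ω) [IsProbabilityMeasure P] [IsProbabilityMeasure Q]
    (ε₁ ε₂ : Ω → ℝ) (h1meas : Measurable ε₁) (h2meas : Measurable ε₂)
    (h1val : ∀ ω, ε₁ ω = 1 ∨ ε₁ ω = -1) (h2val : ∀ ω, ε₂ ω = 1 ∨ ε₂ ω = -1)
    (hP1 : P {ω | ε₁ ω = 1} = 1 / 2) (hP2 : P {ω | ε₂ ω = 1} = 1 / 2)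
    (hindP : IndepFun ε₁ ε₂ P)
    (h σ θ γ μ x : ℝ) (hh : 0 < h) (hσ : 0 < σ) (hγ : 0 < γ)
    (hθ0 : 0 ≤ θ * Real.sqrt h) (hθ1 : θ * Real.sqrt h < 1) (hμ : μ = θ * σ)
    (hQ1 : Q {ω | ε₁ ω = 1} = ENNReal.ofReal ((1 - θ * Real.sqrt h) / 2))
    (hQ2 : Q {ω | ε₂ ω = 1} = 1 / 2)
    (hindQ : IndepFun ε₁ ε₂ Q)
    (F : Ω → ℝ)
    (hFmeas : Measurable[(MeasurableSpace.comap ε₁ inferInstance) ⊔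
      (MeasurableSpace.comap ε₂ inferInstance)] F)
    (C : ℝ) (hFbd : ∀ ω, |F ω| ≤ C) :
    let p : ℝ := (1 / γ) * ∫ ω, Real.log
      ((Q[fun ω' => Real.exp (γ * F ω') | MeasurableSpace.comap ε₁ inferInstance]) ω) ∂Q
    (⨆ α : ℝ, ∫ ω, -Real.exp (-γ * (x + p + α * (μ * h + σ * Real.sqrt h * ε₁ ω) - F ω)) ∂P)
      = ⨆ α : ℝ, ∫ ω, -Real.exp (-γ * (x + α * (μ * h + σ * Real.sqrt h * ε₁ ω))) ∂P :=
  one_period_indifference_identity_general (m0 := m0) P Q ε₁ ε₂ h1meas h2meas h1val h2val hP2 hindP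
    h σ θ γ μ x hh hσ hγ hθ1 hμ hQ1 hQ2 hindQ F hFmeas
end
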